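/- Under the block Arnoldi/Petrov–Galerkin setting with $A_j := (\mathbf{Z}_j^*\mathbf{U}_j)^{-1}\mathbf{Z}_j^*A\mathbf{U}_j$ having simple eigenvalues, the residual admits the explicit collinearity formula $\mathrm{Res}_{B,j}(z) = (I - \mathbf{U}_j(\mathbf{Z}_j^*\mathbf{U}_j)^{-1}\mathbf{Z}_j^*)\,U_{j+1}\,\Gamma_{j+1}\, E_j^*\,(zI - A_j)^{-1}\,E_1 R_B$ for all $z$ outside the spectrum of $A_j$. In particular, in the Galerkin case $\mathbf{Z}_j = \mathbf{U}_j$, $\mathrm{Res}_{B,j}(z) = U_{j+1}\Gamma_{j+1}E_j^*(zI - \mathbf{U}_j^*A\mathbf{U}_j)^{-1}E_1R_B$, so all residuals are block collinear to $U_{j+1}$. -/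
import Mathlib


open Matrix Polynomial

abbrev Mat (s : ℕ) := Matrix (Fin s) (Fin s) ℂ

/-- The `(p,q)` block (of size `s × s`) of a `js × js` block matrix. -/
def blk {j s : ℕ} (H : Matrix (Fin j × Fin s) (Fin j × Fin s) ℂ) (p q : Fin j) :
    Mat s := Matrix.of fun a b => H (p, a) (q, b)

/-- The `i`-th block canonical vector `E_i = e_i ⊗ I_s`. -/
def blkE {j s : ℕ} (i : Fin j) : Matrix (Fin j × Fin s) (Fin s) ℂ :=
  Matrix.of fun pa b => if pa.1 = i ∧ pa.2 = b then 1 else 0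

/-- Block upper Hessenberg: all blocks strictly below the first subdiagonal vanish. -/
def BUH {j s : ℕ} (H : Matrix (Fin j × Fin s) (Fin j × Fin s) ℂ) : Prop :=
  ∀ p q : Fin j, (q : ℕ) + 1 < (p : ℕ) → blk H p q = 0

/-- The action `P(N) ∘ W := ∑ᵢ Nⁱ W Pᵢ` of a matrix polynomial on a block vector. -/
noncomputable def act {n : Type*} [Fintype n] [DecidableEq n] {s : ℕ}
    (P : Polynomial (Mat s)) (N : Matrix n n ℂ) (W : Matrix n (Fin s) ℂ) :
    Matrix n (Fin s) ℂ :=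
  ∑ i ∈ Finset.range (P.natDegree + 1), (N ^ i) * W * P.coeff i

/-- Evaluation of a matrix polynomial at a scalar: `P(z) = ∑ᵢ zⁱ Pᵢ`. -/
noncomputable def evalS {s : ℕ} (P : Polynomial (Mat s)) (z : ℂ) : Mat s :=
  ∑ i ∈ Finset.range (P.natDegree + 1), z ^ i • P.coeff i

/-- The subdiagonal block `Γ_i = H_{(i-1)(i-2)}` (paper indexing, `2 ≤ i ≤ j`),
with the convention `Γ_i = I` out of range (in particular `Γ₁ = I`). -/
noncomputable def Gam {j s : ℕ} (H : Matrix (Fin j × Fin s) (Fin j × Fin s) ℂ)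
    (i : ℕ) : Mat s :=
  if h : 2 ≤ i ∧ i ≤ j then blk H ⟨i - 1, by omega⟩ ⟨i - 2, by omega⟩ else 1

/-- explicit collinearity formula for the Petrov–Galerkin residual:
`Res_{B,j}(z) = (I − U(Z*U)⁻¹Z*) U_{j+1} Γ_{j+1} E_j* (zI − A_j)⁻¹ E₁ R_B`;
in the Galerkin case `Z = U` all residuals are block collinear to `U_{j+1}`. -/
theorem residual_collinearity {n j s : ℕ} (hj : 0 < j)
    (A : Matrix (Fin n) (Fin n) ℂ)
    (U Z : Matrix (Fin n) (Fin j × Fin s) ℂ)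
    (u : Matrix (Fin n) (Fin s) ℂ)
    (Hj : Matrix (Fin j × Fin s) (Fin j × Fin s) ℂ) (Γ : Mat s)
    (harn : A * U = U * Hj + u * Γ * (blkE (s := s) (⟨j - 1, by omega⟩ : Fin j))ᴴ)
    (hU : Uᴴ * U = 1) (hu : uᴴ * u = 1) (hUu : Uᴴ * u = 0)
    (hBUH : BUH Hj)
    (hsub : ∀ i : ℕ, 2 ≤ i → i ≤ j → IsUnit (Gam Hj i)) (hΓ : IsUnit Γ)
    (hZ : Zᴴ * Z = 1) (hZU : IsUnit (Zᴴ * U))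
    (RB : Mat s) (hRB : IsUnit RB)
    (B : Matrix (Fin n) (Fin s) ℂ)
    (hB : B = U * blkE (s := s) (⟨0, hj⟩ : Fin j) * RB)
    (Aj : Matrix (Fin j × Fin s) (Fin j × Fin s) ℂ)
    (hAj : Aj = (Zᴴ * U)⁻¹ * (Zᴴ * A * U))
    (hsimple : ∀ θ : ℂ, (Matrix.charpoly Aj).rootMultiplicity θ ≤ 1) :
    (∀ z : ℂ,
      (z • (1 : Matrix (Fin j × Fin s) (Fin j × Fin s) ℂ) - Aj).det ≠ 0 →
      B - (z • (1 : Matrix (Fin n) (Fin n) ℂ) - A) *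
          (U * ((z • (1 : Matrix (Fin j × Fin s) (Fin j × Fin s) ℂ) - Aj)⁻¹ *
            blkE (s := s) (⟨0, hj⟩ : Fin j) * RB)) =
        (1 - U * (Zᴴ * U)⁻¹ * Zᴴ) * u * Γ *
          ((blkE (s := s) (⟨j - 1, by omega⟩ : Fin j))ᴴ *
            (z • (1 : Matrix (Fin j × Fin s) (Fin j × Fin s) ℂ) - Aj)⁻¹ *
            blkE (s := s) (⟨0, hj⟩ : Fin j) * RB)) ∧
    (Z = U → ∀ z : ℂ,
      (z • (1 : Matrix (Fin j × Fin s) (Fin j × Fin s) ℂ) - (Uᴴ * A * U)).det ≠ 0 →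
      B - (z • (1 : Matrix (Fin n) (Fin n) ℂ) - A) *
          (U * ((z • (1 : Matrix (Fin j × Fin s) (Fin j × Fin s) ℂ) - (Uᴴ * A * U))⁻¹ *
            blkE (s := s) (⟨0, hj⟩ : Fin j) * RB)) =
        u * Γ * ((blkE (s := s) (⟨j - 1, by omega⟩ : Fin j))ᴴ *
            (z • (1 : Matrix (Fin j × Fin s) (Fin j × Fin s) ℂ) - (Uᴴ * A * U))⁻¹ *
            blkE (s := s) (⟨0, hj⟩ : Fin j) * RB)) := by
  have hWdet : IsUnit (Zᴴ * U).det := (Matrix.isUnit_iff_isUnit_det _).mp hZU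
  have hW1 : (Zᴴ * U)⁻¹ * (Zᴴ * U) = 1 := Matrix.nonsing_inv_mul _ hWdet
  have main : ∀ z : ℂ,
      (z • (1 : Matrix (Fin j × Fin s) (Fin j × Fin s) ℂ) - Aj).det ≠ 0 →
      B - (z • (1 : Matrix (Fin n) (Fin n) ℂ) - A) *
          (U * ((z • (1 : Matrix (Fin j × Fin s) (Fin j × Fin s) ℂ) - Aj)⁻¹ *
            blkE (s := s) (⟨0, hj⟩ : Fin j) * RB)) =
        (1 - U * (Zᴴ * U)⁻¹ * Zᴴ) * u * Γ *
          ((blkE (s := s) (⟨j - 1, by omega⟩ : Fin j))ᴴ *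
            (z • (1 : Matrix (Fin j × Fin s) (Fin j × Fin s) ℂ) - Aj)⁻¹ *
            blkE (s := s) (⟨0, hj⟩ : Fin j) * RB) := by
    intro z hz
    set E1 : Matrix (Fin j × Fin s) (Fin s) ℂ := blkE (s := s) (⟨0, hj⟩ : Fin j) with hE1
    set EjH : Matrix (Fin s) (Fin j × Fin s) ℂ :=
      (blkE (s := s) (⟨j - 1, by omega⟩ : Fin j))ᴴ with hEjH
    set M : Matrix (Fin j × Fin s) (Fin j × Fin s) ℂ :=
      z • (1 : Matrix (Fin j × Fin s) (Fin j × Fin s) ℂ) - Aj with hM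
    have hMdet : IsUnit M.det := isUnit_iff_ne_zero.mpr hz
    have hMinv : M * M⁻¹ = 1 := Matrix.mul_nonsing_inv _ hMdet
    have h1 : Aj = Hj + (Zᴴ * U)⁻¹ * Zᴴ * (u * Γ * EjH) := by
      rw [hAj, Matrix.mul_assoc Zᴴ A U, harn, Matrix.mul_add, Matrix.mul_add,
        ← Matrix.mul_assoc Zᴴ U Hj, ← Matrix.mul_assoc ((Zᴴ * U)⁻¹) (Zᴴ * U) Hj, hW1, one_mul,
        ← Matrix.mul_assoc ((Zᴴ * U)⁻¹) Zᴴ _]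
    have hAU : (z • (1 : Matrix (Fin n) (Fin n) ℂ) - A) * U
        = U * M - (1 - U * (Zᴴ * U)⁻¹ * Zᴴ) * u * Γ * EjH := by
      rw [hM, h1]
      simp only [Matrix.sub_mul, Matrix.mul_sub, Matrix.mul_add, Matrix.one_mul,
        Matrix.mul_one, Matrix.smul_mul, harn, Matrix.mul_smul]
      simp only [Matrix.mul_assoc]
      abel
    have hcanc : M * (M⁻¹ * (E1 * RB)) = E1 * RB := by
      rw [← Matrix.mul_assoc, hMinv, Matrix.one_mul]
    conv_lhs => rw [← Matrix.mul_assoc (z • (1 : Matrix (Fin n) (Fin n) ℂ) - A) U, hAU]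
    rw [hB]
    simp only [Matrix.sub_mul, Matrix.mul_assoc, hcanc]
    abel
  refine ⟨main, ?_⟩
  intro hZeq z
  subst hZeq
  have hAjU : Aj = Zᴴ * A * Z := by
    rw [hAj, hU, inv_one, Matrix.one_mul]
  rw [← hAjU]
  intro hz
  have hpre : ((1 : Matrix (Fin n) (Fin n) ℂ) - Z * (Zᴴ * Z)⁻¹ * Zᴴ) * u = u := by
    rw [hU, inv_one, Matrix.mul_one, Matrix.sub_mul, Matrix.one_mul,
      Matrix.mul_assoc, hUu, Matrix.mul_zero, sub_zero]
  rw [main z hz, hpre]
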